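/- Let u and v be convergent power series with real coefficients such that the formal product v·u equals 1, let n ≥ 1, and let w : ℝ → ℝ be continuous. Then u • w is a polynomial function of degree at most n−1 (i.e., of the form x ↦ Σ_{k=0}^{n−1} c_k x^k / k!) if and only if w = E(v·p) for some real polynomial p = Σ_{k=0}^{n−1} p_k T^k of degree at most n−1, where v·p is the Cauchy product and E is the E-transform. (This expresses Theorem 1: the solutions of the differential equation D_φ w = 0 for φ = u/T^n are exactly w = E(p/u) with deg p ≤ n−1.) -/

import Mathlib

/-!
For convergent `f`, `g` and continuous `w` the action is multiplicative:
`f • (g • w) = (f * g) • w`. The operator `V` commutes with `g •` by dominated convergence,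
using `|Vᵐ w x| ≤ M |x|ᵐ / m!` near `x`, and the double series `∑ aₖ bₘ Vᵏ⁺ᵐ w x` converges
absolutely, so it can be summed along antidiagonals. Since `Vᵐ 1 = xᵐ / m!`, the E-transform is
`E(q) = q • 1`. As `v u = 1`, `u • w = p • 1` gives `w = v • (u • w) = (v p) • 1`, and conversely
`u • ((v p) • 1) = (u v p) • 1 = p • 1`.
-/

/-- The normalized indefinite integral: `(V w) x = ∫_0^x w(t) dt`. -/
noncomputable def V (w : ℝ → ℝ) : ℝ → ℝ := fun x => ∫ t in (0:ℝ)..x, w t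

open MeasureTheory Finset PowerSeries
open scoped Nat Interval

theorem continuous_V {w : ℝ → ℝ} (hw : Continuous w) : Continuous (V w) :=
  intervalIntegral.continuous_primitive (fun a b => hw.intervalIntegrable a b) 0

theorem continuous_iterate_V {w : ℝ → ℝ} (hw : Continuous w) (m : ℕ) :
    Continuous (V^[m] w) := by
  induction m with
  | zero => exact hw
  | succ m ih => rw [Function.iterate_succ_apply']; exact continuous_V ih

theorem iterate_V_succ_apply (w : ℝ → ℝ) (m : ℕ) (x : ℝ) :
    V^[m + 1] w x = ∫ t in (0:ℝ)..x, V^[m] w t := by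
  rw [Function.iterate_succ_apply']; rfl

theorem abs_iterate_V_le {w : ℝ → ℝ} {R M : ℝ}
    (hM : ∀ y, |y| ≤ R → |w y| ≤ M) (m : ℕ) {x : ℝ} (hx : |x| ≤ R) :
    |V^[m] w x| ≤ M * |x| ^ m / m ! := by
  induction m generalizing x with
  | zero => simpa using hM x hx
  | succ m ih =>
    have hbound : ∀ t ∈ Ι 0 x, ‖V^[m] w t‖ ≤ M / m ! * |t - 0| ^ m := fun t ht => by
      have htx : |t - 0| ≤ |x - 0| := Set.abs_sub_left_of_mem_uIcc (Set.uIoc_subset_uIcc ht)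
      rw [sub_zero, sub_zero] at htx
      rw [sub_zero]
      calc ‖V^[m] w t‖ ≤ M * |t| ^ m / m ! := ih (htx.trans hx)
        _ = M / m ! * |t| ^ m := by ring
    calc |V^[m + 1] w x| = ‖∫ t in Ι 0 x, V^[m] w t‖ := by
          rw [iterate_V_succ_apply, ← intervalIntegral.norm_intervalIntegral_eq]; rfl
      _ ≤ ∫ t in Ι 0 x, M / m ! * |t - 0| ^ m :=
          norm_integral_le_of_norm_le (Continuous.integrableOn_uIoc (by fun_prop))
            (ae_restrict_of_forall_mem measurableSet_uIoc hbound)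
      _ = M * |x| ^ (m + 1) / (m + 1)! := by
          rw [integral_const_mul, integral_pow_abs_sub_uIoc, sub_zero, Nat.factorial_succ]
          push_cast
          field_simp

theorem exists_abs_iterate_V_le {w : ℝ → ℝ} (hw : Continuous w) (R : ℝ) :
    ∃ M, ∀ m x, |x| ≤ R → |V^[m] w x| ≤ M * R ^ m / m ! := by
  obtain ⟨M, hM⟩ := (isCompact_closedBall (0 : ℝ) R).exists_bound_of_continuousOn hw.continuousOn
  have hM' : ∀ y, |y| ≤ R → |w y| ≤ M := fun y hy =>
    hM y (mem_closedBall_zero_iff.2 hy)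
  refine ⟨M, fun m x hx => (abs_iterate_V_le hM' m hx).trans ?_⟩
  have hM0 : 0 ≤ M := (abs_nonneg _).trans (hM' 0 (by simpa using (abs_nonneg x).trans hx))
  gcongr

theorem iterate_V_const_one (m : ℕ) (x : ℝ) : V^[m] (fun _ => 1) x = x ^ m / m ! := by
  induction m generalizing x with
  | zero => simp
  | succ m ih =>
    rw [iterate_V_succ_apply, intervalIntegral.integral_congr (fun t _ => ih t),
      intervalIntegral.integral_div, integral_pow, Nat.factorial_succ]
    push_cast
    field_simp
    ring

def HasGeomCoeffBound (f : ℝ⟦X⟧) : Prop :=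
  ∃ C s : ℝ, 0 ≤ C ∧ 0 ≤ s ∧ ∀ n, |coeff n f| ≤ C * s ^ n

theorem hasGeomCoeffBound_mk {a : ℕ → ℝ} (h : ∃ r : ℝ, 0 < r ∧ Summable fun n => |a n| * r ^ n) :
    HasGeomCoeffBound (mk a) := by
  obtain ⟨r, hr, hsum⟩ := h
  refine ⟨∑' n, |a n| * r ^ n, r⁻¹, tsum_nonneg fun n => by positivity, by positivity,
    fun n => ?_⟩
  have hle : |a n| * r ^ n ≤ ∑' n, |a n| * r ^ n := hsum.le_tsum n fun k _ => by positivity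
  calc |coeff n (mk a)| = |a n| * r ^ n * r⁻¹ ^ n := by
        rw [coeff_mk, mul_assoc, ← mul_pow, mul_inv_cancel₀ hr.ne', one_pow, mul_one]
    _ ≤ (∑' n, |a n| * r ^ n) * r⁻¹ ^ n := by gcongr

theorem hasGeomCoeffBound_mk_of_eq_zero {a : ℕ → ℝ} {n : ℕ} (h : ∀ k, n ≤ k → a k = 0) :
    HasGeomCoeffBound (mk a) := by
  refine ⟨∑ k ∈ range n, |a k|, 1, by positivity, zero_le_one, fun k => ?_⟩
  rw [coeff_mk, one_pow, mul_one]
  by_cases hk : k < n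
  · exact single_le_sum (fun i _ => abs_nonneg (a i)) (mem_range.2 hk)
  · rw [h k (not_lt.1 hk), abs_zero]; positivity

theorem HasGeomCoeffBound.mul {f g : ℝ⟦X⟧} (hf : HasGeomCoeffBound f) (hg : HasGeomCoeffBound g) :
    HasGeomCoeffBound (f * g) := by
  obtain ⟨C, s, hC, hs, hfC⟩ := hf
  obtain ⟨D, t, hD, ht, hgD⟩ := hg
  set S := max s t
  refine ⟨C * D, 2 * S, by positivity, by positivity, fun n => ?_⟩
  have hterm : ∀ p ∈ antidiagonal n, |coeff p.1 f * coeff p.2 g| ≤ C * D * S ^ n := by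
    intro p hp
    rw [← mem_antidiagonal.1 hp, abs_mul, pow_add, mul_mul_mul_comm]
    gcongr
    · exact (hfC p.1).trans (by gcongr; exact le_max_left s t)
    · exact (hgD p.2).trans (by gcongr; exact le_max_right s t)
  have hcard : ((n + 1 : ℕ) : ℝ) ≤ 2 ^ n := by exact_mod_cast Nat.lt_two_pow_self
  calc |coeff n (f * g)| ≤ ∑ p ∈ antidiagonal n, |coeff p.1 f * coeff p.2 g| := by
        rw [coeff_mul]; exact abs_sum_le_sum_abs _ _
    _ ≤ (n + 1 : ℕ) * (C * D * S ^ n) := by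
        simpa [Finset.Nat.card_antidiagonal] using sum_le_card_nsmul _ _ _ hterm
    _ ≤ 2 ^ n * (C * D * S ^ n) := by gcongr
    _ = C * D * (2 * S) ^ n := by ring

theorem coeff_mk_mul_mk {R : Type*} [Semiring R] (a b : ℕ → R) (n : ℕ) :
    coeff n (mk a * mk b) = ∑ k ∈ range (n + 1), a k * b (n - k) := by
  rw [coeff_mul, Finset.Nat.sum_antidiagonal_eq_sum_range_succ_mk]
  simp only [coeff_mk]

theorem tsum_prod_eq_tsum_sum_antidiagonal {α : Type*} [AddCommMonoid α] [TopologicalSpace α]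
    [ContinuousAdd α] [T3Space α] {F : ℕ × ℕ → α} (hF : Summable F) :
    ∑' p, F p = ∑' n, ∑ p ∈ antidiagonal n, F p := by
  rw [← Finset.HasAntidiagonal.sigmaAntidiagonalEquivProd.tsum_eq F]
  refine (Summable.tsum_sigma' (fun _ => .of_finite)
    (Finset.HasAntidiagonal.sigmaAntidiagonalEquivProd.summable_iff.2 hF)).trans ?_
  exact tsum_congr fun n => Finset.tsum_subtype (antidiagonal n) F

/-- The action `f • w` of the paper. -/
noncomputable def seriesAct (f : ℝ⟦X⟧) (w : ℝ → ℝ) (x : ℝ) : ℝ := ∑' m, coeff m f * V^[m] w x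

theorem HasGeomCoeffBound.exists_abs_coeff_mul_iterate_V_le {f : ℝ⟦X⟧} (hf : HasGeomCoeffBound f)
    {w : ℝ → ℝ} (hw : Continuous w) (R : ℝ) :
    ∃ K s : ℝ, ∀ m x, |x| ≤ R → |coeff m f * V^[m] w x| ≤ K * s ^ m / m ! := by
  obtain ⟨C, s, -, -, hfC⟩ := hf
  obtain ⟨M, hM⟩ := exists_abs_iterate_V_le hw R
  refine ⟨C * M, s * R, fun m x hx => ?_⟩
  rw [abs_mul]
  calc |coeff m f| * |V^[m] w x| ≤ C * s ^ m * (M * R ^ m / m !) :=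
        mul_le_mul (hfC m) (hM m x hx) (abs_nonneg _) ((abs_nonneg _).trans (hfC m))
    _ = C * M * (s * R) ^ m / m ! := by ring

theorem HasGeomCoeffBound.summable_coeff_mul_iterate_V {f : ℝ⟦X⟧} (hf : HasGeomCoeffBound f)
    {w : ℝ → ℝ} (hw : Continuous w) (x : ℝ) :
    Summable fun m => coeff m f * V^[m] w x := by
  obtain ⟨K, s, hK⟩ := hf.exists_abs_coeff_mul_iterate_V_le hw |x|
  refine .of_norm_bounded ?_ fun m => hK m x le_rfl
  simpa only [mul_div_assoc] using (Real.summable_pow_div_factorial s).mul_left K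

theorem HasGeomCoeffBound.V_seriesAct {f : ℝ⟦X⟧} (hf : HasGeomCoeffBound f)
    {w : ℝ → ℝ} (hw : Continuous w) : V (seriesAct f w) = seriesAct f (V w) := by
  funext x
  obtain ⟨K, s, hK⟩ := hf.exists_abs_coeff_mul_iterate_V_le hw |x|
  have hsum := intervalIntegral.hasSum_integral_of_dominated_convergence
    (μ := volume) (a := 0) (b := x)
    (F := fun m t => coeff m f * V^[m] w t) (f := seriesAct f w) (fun m _ => K * s ^ m / m !)
    (fun m => (continuous_const.mul (continuous_iterate_V hw m)).aestronglyMeasurable)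
    (fun m => .of_forall fun t ht => hK m t <| by
      simpa using Set.abs_sub_left_of_mem_uIcc (Set.uIoc_subset_uIcc ht))
    (.of_forall fun _ _ => by
      simpa only [mul_div_assoc] using (Real.summable_pow_div_factorial s).mul_left K)
    intervalIntegrable_const
    (.of_forall fun t _ => (hf.summable_coeff_mul_iterate_V hw t).hasSum)
  refine hsum.tsum_eq.symm.trans (tsum_congr fun m => ?_)
  rw [intervalIntegral.integral_const_mul, ← iterate_V_succ_apply, Function.iterate_succ_apply]

theorem HasGeomCoeffBound.iterate_V_seriesAct {f : ℝ⟦X⟧} (hf : HasGeomCoeffBound f)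
    {w : ℝ → ℝ} (hw : Continuous w) (k : ℕ) : V^[k] (seriesAct f w) = seriesAct f (V^[k] w) := by
  induction k with
  | zero => rfl
  | succ k ih =>
    rw [Function.iterate_succ_apply', ih, hf.V_seriesAct (continuous_iterate_V hw k),
      ← Function.iterate_succ_apply' V]

theorem HasGeomCoeffBound.summable_coeff_mul_coeff_mul_iterate_V {f g : ℝ⟦X⟧}
    (hf : HasGeomCoeffBound f) (hg : HasGeomCoeffBound g) {w : ℝ → ℝ} (hw : Continuous w)
    (x : ℝ) : Summable fun p : ℕ × ℕ => coeff p.1 f * (coeff p.2 g * V^[p.1 + p.2] w x) := by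
  obtain ⟨C, s, hC, hs, hfC⟩ := hf
  obtain ⟨D, t, hD, ht, hgD⟩ := hg
  obtain ⟨M, hM⟩ := exists_abs_iterate_V_le hw |x|
  have hM0 : 0 ≤ M := (abs_nonneg _).trans <| by simpa using hM 0 0 (by simp)
  refine .of_norm_bounded (Summable.mul_of_nonneg
    ((Real.summable_pow_div_factorial (s * |x|)).mul_left C)
    ((Real.summable_pow_div_factorial (t * |x|)).mul_left (D * M))
    (fun _ => by positivity) (fun _ => by positivity)) fun ⟨k, m⟩ => ?_
  have hfact : ((k ! * m ! : ℕ) : ℝ) ≤ (k + m)! := by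
    exact_mod_cast Nat.le_of_dvd (Nat.factorial_pos _)
      (Nat.factorial_mul_factorial_dvd_factorial_add k m)
  rw [Real.norm_eq_abs, abs_mul, abs_mul]
  calc |coeff k f| * (|coeff m g| * |V^[k + m] w x|)
      ≤ C * s ^ k * (D * t ^ m * (M * |x| ^ (k + m) / (k + m)!)) := by
        gcongr
        exacts [hfC k, hgD m, hM _ x le_rfl]
    _ ≤ C * s ^ k * (D * t ^ m * (M * |x| ^ (k + m) / (k ! * m ! : ℕ))) := by gcongr
    _ = C * ((s * |x|) ^ k / k !) * (D * M * ((t * |x|) ^ m / m !)) := by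
        push_cast; rw [mul_pow, mul_pow, pow_add]; field_simp

theorem HasGeomCoeffBound.seriesAct_seriesAct {f g : ℝ⟦X⟧} (hf : HasGeomCoeffBound f)
    (hg : HasGeomCoeffBound g) {w : ℝ → ℝ} (hw : Continuous w) :
    seriesAct f (seriesAct g w) = seriesAct (f * g) w := by
  funext x
  have hsum := hf.summable_coeff_mul_coeff_mul_iterate_V hg hw x
  calc seriesAct f (seriesAct g w) x
      = ∑' k, ∑' m, coeff k f * (coeff m g * V^[k + m] w x) := by
        refine tsum_congr fun k => ?_
        rw [hg.iterate_V_seriesAct hw, seriesAct, ← tsum_mul_left]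
        simp only [← Function.iterate_add_apply, add_comm]
    _ = ∑' n, ∑ p ∈ antidiagonal n, coeff p.1 f * (coeff p.2 g * V^[p.1 + p.2] w x) := by
        rw [← hsum.tsum_prod, tsum_prod_eq_tsum_sum_antidiagonal hsum]
    _ = seriesAct (f * g) w x := by
        refine tsum_congr fun n => ?_
        rw [coeff_mul, sum_mul]
        refine sum_congr rfl fun p hp => ?_
        rw [mem_antidiagonal.1 hp, mul_assoc]

theorem seriesAct_one (w : ℝ → ℝ) : seriesAct 1 w = w := by
  funext x
  simp [seriesAct, coeff_one]

theorem seriesAct_const_one (f : ℝ⟦X⟧) (x : ℝ) :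
    seriesAct f (fun _ => 1) x = ∑' m, coeff m f * x ^ m / m ! := by
  simp only [seriesAct, iterate_V_const_one, mul_div_assoc]

theorem seriesAct_mk_const_one_of_eq_zero {a : ℕ → ℝ} {n : ℕ} (h : ∀ k, n ≤ k → a k = 0)
    (x : ℝ) : seriesAct (mk a) (fun _ => 1) x = ∑ k ∈ range n, a k * x ^ k / k ! := by
  simp only [seriesAct_const_one, coeff_mk]
  exact tsum_eq_sum fun k hk => by rw [h k (not_lt.1 (mem_range.not.1 hk)), zero_mul, zero_div]

theorem solutions_of_D_phi_general (u v : ℕ → ℝ)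
    (hu : ∃ r : ℝ, 0 < r ∧ Summable (fun n => |u n| * r ^ n))
    (hv : ∃ r : ℝ, 0 < r ∧ Summable (fun n => |v n| * r ^ n))
    (hvu : ∀ m : ℕ, ∑ k ∈ Finset.range (m + 1), v k * u (m - k) = if m = 0 then 1 else 0)
    (n : ℕ) (w : ℝ → ℝ) (hw : Continuous w) :
    (∃ c : ℕ → ℝ, ∀ x : ℝ,
        ∑' m, u m * (V^[m] w) x = ∑ k ∈ Finset.range n, c k * x ^ k / (Nat.factorial k)) ↔
    (∃ p : ℕ → ℝ, (∀ k, n ≤ k → p k = 0) ∧ ∀ x : ℝ,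
        w x = ∑' m, (∑ k ∈ Finset.range (m + 1), v k * p (m - k)) * x ^ m / (Nat.factorial m)) := by
  have hU := hasGeomCoeffBound_mk hu
  have hV := hasGeomCoeffBound_mk hv
  have hVU : mk v * mk u = 1 := by
    ext m; rw [coeff_mk_mul_mk, hvu, coeff_one]
  have hact : ∀ x, ∑' m, u m * (V^[m] w) x = seriesAct (mk u) w x := by
    simp [seriesAct]
  have hE : ∀ (p : ℕ → ℝ) x, ∑' m, (∑ k ∈ range (m + 1), v k * p (m - k)) * x ^ m / m ! =
      seriesAct (mk v * mk p) (fun _ => 1) x := by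
    simp [seriesAct_const_one, coeff_mk_mul_mk]
  simp only [hact, hE]
  constructor
  · rintro ⟨c, hc⟩
    set p : ℕ → ℝ := fun k => if k < n then c k else 0
    have hp : ∀ k, n ≤ k → p k = 0 := fun k hk => if_neg (not_lt.2 hk)
    have huw : seriesAct (mk u) w = seriesAct (mk p) (fun _ => 1) := by
      funext x
      rw [hc, seriesAct_mk_const_one_of_eq_zero hp]
      exact sum_congr rfl fun k hk => by simp [p, mem_range.1 hk]
    refine ⟨p, hp, fun x => ?_⟩
    calc w x = seriesAct (mk v * mk u) w x := by rw [hVU, seriesAct_one]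
      _ = seriesAct (mk v) (seriesAct (mk p) fun _ => 1) x := by
        rw [← hV.seriesAct_seriesAct hU hw, huw]
      _ = seriesAct (mk v * mk p) (fun _ => 1) x := by
        rw [hV.seriesAct_seriesAct (hasGeomCoeffBound_mk_of_eq_zero hp) continuous_const]
  · rintro ⟨p, hp, hwp⟩
    refine ⟨p, fun x => ?_⟩
    calc seriesAct (mk u) w x = seriesAct (mk u * (mk v * mk p)) (fun _ => 1) x := by
          rw [funext hwp, hU.seriesAct_seriesAct (hV.mul (hasGeomCoeffBound_mk_of_eq_zero hp))
            continuous_const]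
      _ = seriesAct (mk p) (fun _ => 1) x := by rw [← mul_assoc, mul_comm (mk u), hVU, one_mul]
      _ = ∑ k ∈ range n, p k * x ^ k / k ! := seriesAct_mk_const_one_of_eq_zero hp x

/-- Theorem 1: let `u`, `v` be convergent power series with `v·u = 1` (formally),
`n ≥ 1` and `w` continuous.  Then `u • w` is a polynomial function of degree `≤ n-1`
(in the "divided power" basis `x^k/k!`) iff `w = E(v·p)` for some polynomial `p` of
degree `≤ n-1`, where `v·p` is the Cauchy product and `E` the E-transform. -/
theorem solutions_of_D_phi (u v : ℕ → ℝ)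
    (hu : ∃ r : ℝ, 0 < r ∧ Summable (fun n => |u n| * r ^ n))
    (hv : ∃ r : ℝ, 0 < r ∧ Summable (fun n => |v n| * r ^ n))
    (hvu : ∀ m : ℕ, ∑ k ∈ Finset.range (m + 1), v k * u (m - k) = if m = 0 then 1 else 0)
    (n : ℕ) (hn : 1 ≤ n) (w : ℝ → ℝ) (hw : Continuous w) :
    (∃ c : ℕ → ℝ, ∀ x : ℝ,
        ∑' m, u m * (V^[m] w) x = ∑ k ∈ Finset.range n, c k * x ^ k / (Nat.factorial k)) ↔
    (∃ p : ℕ → ℝ, (∀ k, n ≤ k → p k = 0) ∧ ∀ x : ℝ,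
        w x = ∑' m, (∑ k ∈ Finset.range (m + 1), v k * p (m - k)) * x ^ m / (Nat.factorial m)) :=
  solutions_of_D_phi_general u v hu hv hvu n w hw
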